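/- For n ≥ 2 and the Fourier matrix u on ℤ/nℤ, the complex dimension of the subspace {f : ZMod n × ZMod n → ℂ | C_u f = D_u f} equals 2n - 1 if and only if n is prime. -/

import Mathlib

open Finset Matrix

/-- The symbol-to-operator map `C_u` as a complex-linear map. -/
noncomputable def CL {ι : Type*} [Fintype ι] (u : Matrix ι ι ℂ) :
    ((ι × ι) → ℂ) →ₗ[ℂ] Matrix ι ι ℂ where
  toFun f := fun k k' => ∑ l, u k l * f (k, l) * (starRingEnd ℂ) (u k' l)
  map_add' f g := by
    funext k k'
    simp [mul_add, add_mul, Finset.sum_add_distrib]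
    rfl
  map_smul' c f := by
    funext k k'
    simp only [Pi.smul_apply, smul_eq_mul, RingHom.id_apply, Matrix.smul_apply]
    show _ = c * ∑ l, u k l * f (k, l) * (starRingEnd ℂ) (u k' l)
    rw [Finset.mul_sum]
    exact Finset.sum_congr rfl fun l _ => by ring

/-- The symbol-to-operator map `D_u` as a complex-linear map. -/
noncomputable def DL {ι : Type*} [Fintype ι] (u : Matrix ι ι ℂ) :
    ((ι × ι) → ℂ) →ₗ[ℂ] Matrix ι ι ℂ where
  toFun f := fun k k' => ∑ l, u k l * f (k', l) * (starRingEnd ℂ) (u k' l)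
  map_add' f g := by
    funext k k'
    simp [mul_add, add_mul, Finset.sum_add_distrib]
    rfl
  map_smul' c f := by
    funext k k'
    simp only [Pi.smul_apply, smul_eq_mul, RingHom.id_apply, Matrix.smul_apply]
    show _ = c * ∑ l, u k l * f (k', l) * (starRingEnd ℂ) (u k' l)
    rw [Finset.mul_sum]
    exact Finset.sum_congr rfl fun l _ => by ring

/-!
Conjugating by the Fourier matrix, `(C_u f - D_u f) k k'` is `1/n` times the difference of the
Fourier transforms of the rows `f (k, ·)` and `f (k', ·)` at frequency `k' - k`. Hence `f` lies in
the kernel iff, for every `d`, the `d`-th row coefficient is `d`-periodic in `k`, i.e. iff the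
two-dimensional Fourier transform of `f` vanishes off `{(m, d) | m * d = 0}`. The kernel therefore
has dimension `#{(m, d) | m * d = 0}`, which equals `2n - 1` (the pairs with a zero coordinate)
exactly when `ZMod n` has no zero divisors, i.e. when `n` is prime.
-/

section ZeroDivisors

variable {M : Type*} [MulZeroClass M] [Fintype M] [DecidableEq M]

lemma card_fst_eq_zero_or_snd_eq_zero :
    Fintype.card {p : M × M // p.1 = 0 ∨ p.2 = 0} = 2 * Fintype.card M - 1 := by
  have hunion : ({p : M × M | p.1 = 0 ∨ p.2 = 0} : Finset (M × M))
      = {0} ×ˢ univ ∪ univ ×ˢ {0} := by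
    ext p; simp only [mem_filter, mem_union, mem_product, mem_singleton, mem_univ, true_and,
      and_true]
  have hinter : ({0} ×ˢ univ ∩ univ ×ˢ {0} : Finset (M × M)) = {(0, 0)} := by
    ext p; simp only [mem_inter, mem_product, mem_singleton, mem_univ, true_and, and_true,
      Prod.ext_iff]
  have h := card_union_add_card_inter ({0} ×ˢ univ : Finset (M × M)) (univ ×ˢ {0})
  rw [← hunion, hinter] at h
  simp only [card_product, card_singleton, card_univ, one_mul, mul_one] at h
  rw [Fintype.card_subtype]
  omega

lemma card_mul_eq_zero_eq_iff_noZeroDivisors :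
    Fintype.card {p : M × M // p.1 * p.2 = 0} = 2 * Fintype.card M - 1 ↔
      NoZeroDivisors M := by
  have hsub : ({p : M × M | p.1 = 0 ∨ p.2 = 0} : Finset (M × M)) ⊆
      ({p : M × M | p.1 * p.2 = 0} : Finset (M × M)) := by
    rintro ⟨a, b⟩; simp only [mem_filter, mem_univ, true_and]
    rintro (rfl | rfl) <;> simp
  rw [← card_fst_eq_zero_or_snd_eq_zero, Fintype.card_subtype, Fintype.card_subtype,
    noZeroDivisors_iff]
  constructor
  · intro hcard a b hab
    have hmem : (a, b) ∈ ({p : M × M | p.1 * p.2 = 0} : Finset (M × M)) := by simpa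
    rw [← eq_of_subset_of_card_le hsub hcard.le] at hmem
    simpa using hmem
  · intro h
    congr 1
    refine (Finset.Subset.antisymm hsub ?_).symm
    rintro ⟨a, b⟩; simpa using h

end ZeroDivisors

lemma ZMod.noZeroDivisors_iff_prime {n : ℕ} (hn : 2 ≤ n) : NoZeroDivisors (ZMod n) ↔ n.Prime :=
  ⟨fun _ => CharP.char_is_prime_of_two_le (ZMod n) n hn, fun hp =>
    haveI := Fact.mk hp; inferInstance⟩

lemma finrank_iInf_ker_proj_compl {K ι : Type*} [Field K] [Fintype ι] (I : Set ι)
    [DecidablePred (· ∈ I)] :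
    Module.finrank K (⨅ i ∈ Iᶜ, LinearMap.ker (LinearMap.proj i : (ι → K) →ₗ[K] K) :
      Submodule K (ι → K)) = Fintype.card I := by
  rw [(LinearMap.iInfKerProjEquiv K (fun _ => K) disjoint_compl_right
    (Set.union_compl_self I).ge).finrank_eq, Module.finrank_fintype_fun_eq_card]

open ZMod

section DFT

variable {N : ℕ} [NeZero N] {E : Type*} [AddCommGroup E] [Module ℂ E]

lemma ZMod.stdAddChar_eq_one_iff {t : ZMod N} : stdAddChar t = 1 ↔ t = 0 := by
  rw [← (stdAddChar (N := N)).map_zero_eq_one, injective_stdAddChar.eq_iff]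

lemma ZMod.dft_comp_add_right (Φ : ZMod N → E) (d m : ZMod N) :
    𝓕 (fun k => Φ (k + d)) m = stdAddChar (d * m) • 𝓕 Φ m := by
  rw [dft_apply, dft_apply, Finset.smul_sum]
  refine Fintype.sum_equiv (Equiv.addRight d) _ _ fun j => ?_
  rw [Equiv.coe_addRight, smul_smul, ← AddChar.map_add_eq_mul]
  congr 2
  ring

lemma ZMod.periodic_iff_dft_eq_zero (Φ : ZMod N → E) (d : ZMod N) :
    Function.Periodic Φ d ↔ ∀ m, d * m ≠ 0 → 𝓕 Φ m = 0 := by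
  have hshift : Function.Periodic Φ d ↔ ∀ m, (stdAddChar (d * m) - 1) • 𝓕 Φ m = 0 := by
    simp only [sub_smul, one_smul, sub_eq_zero, ← dft_comp_add_right]
    rw [← funext_iff, dft.injective.eq_iff]
    exact funext_iff.symm
  simp only [hshift, smul_eq_zero, sub_eq_zero, stdAddChar_eq_one_iff]
  exact forall_congr' fun m => or_iff_not_imp_left

variable (N) in
noncomputable def ZMod.dft₂ : ((ZMod N × ZMod N) → ℂ) ≃ₗ[ℂ] ((ZMod N × ZMod N) → ℂ) :=
  (LinearEquiv.curry ℂ ℂ (ZMod N) (ZMod N)).trans <|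
    ((LinearEquiv.piCongrRight fun _ => dft).trans dft).trans
    (LinearEquiv.curry ℂ ℂ (ZMod N) (ZMod N)).symm

lemma ZMod.dft₂_apply (f : (ZMod N × ZMod N) → ℂ) (m d : ZMod N) :
    dft₂ N f (m, d) = 𝓕 (fun k => 𝓕 (fun l => f (k, l)) d) m := by
  simp [dft₂, dft_apply, Finset.sum_apply]

end DFT

section FourierMatrix

variable {N : ℕ} [NeZero N] {u : Matrix (ZMod N) (ZMod N) ℂ}

lemma mul_conj_eq_of_fourier (hu : ∀ k l, u k l = stdAddChar (k * l) / Real.sqrt N)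
    (k k' l : ZMod N) :
    u k l * starRingEnd ℂ (u k' l) = (N : ℂ)⁻¹ * stdAddChar (-(l * (k' - k))) := by
  have hsqrt : (Real.sqrt N : ℂ) * Real.sqrt N = N := by
    norm_cast; exact Real.mul_self_sqrt N.cast_nonneg
  rw [hu, hu, map_div₀, ← AddChar.map_neg_eq_conj, Complex.conj_ofReal, div_mul_div_comm,
    ← AddChar.map_add_eq_mul, hsqrt, div_eq_inv_mul]
  ring_nf

lemma CL_apply_of_fourier (hu : ∀ k l, u k l = stdAddChar (k * l) / Real.sqrt N)
    (f : ZMod N × ZMod N → ℂ) (k k' : ZMod N) :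
    CL u f k k' = (N : ℂ)⁻¹ * 𝓕 (fun l => f (k, l)) (k' - k) := by
  simp only [CL, dft_apply, smul_eq_mul, Finset.mul_sum]
  refine Finset.sum_congr rfl fun l _ => ?_
  rw [mul_right_comm, mul_conj_eq_of_fourier hu]
  ring

lemma DL_apply_of_fourier (hu : ∀ k l, u k l = stdAddChar (k * l) / Real.sqrt N)
    (f : ZMod N × ZMod N → ℂ) (k k' : ZMod N) :
    DL u f k k' = (N : ℂ)⁻¹ * 𝓕 (fun l => f (k', l)) (k' - k) := by
  simp only [DL, dft_apply, smul_eq_mul, Finset.mul_sum]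
  refine Finset.sum_congr rfl fun l _ => ?_
  rw [mul_right_comm, mul_conj_eq_of_fourier hu]
  ring

lemma ker_CL_sub_DL_eq_comap_dft₂ (hu : ∀ k l, u k l = stdAddChar (k * l) / Real.sqrt N) :
    LinearMap.ker (CL u - DL u) = Submodule.comap (dft₂ N).toLinearMap
      (⨅ p ∈ {p : ZMod N × ZMod N | p.1 * p.2 = 0}ᶜ, LinearMap.ker (LinearMap.proj p)) := by
  ext f
  have hrows : CL u f = DL u f ↔
      ∀ d, Function.Periodic (fun k => 𝓕 (fun l => f (k, l)) d) d := by
    simp only [← Matrix.ext_iff, CL_apply_of_fourier hu, DL_apply_of_fourier hu,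
      mul_right_inj' (inv_ne_zero (NeZero.ne (N : ℂ))), Function.Periodic]
    exact ⟨fun h d k => by simpa using (h k (k + d)).symm,
      fun h k k' => by simpa using (h (k' - k) k).symm⟩
  simp only [LinearMap.mem_ker, LinearMap.sub_apply, sub_eq_zero, hrows, Submodule.mem_comap,
    Submodule.mem_iInf, LinearMap.proj_apply, periodic_iff_dft_eq_zero, LinearEquiv.coe_coe,
    Set.mem_compl_iff, Set.mem_ofPred_eq, Prod.forall, dft₂_apply]
  exact ⟨fun h m d hmd => h d m (by rwa [mul_comm]), fun h d m hdm => h m d (by rwa [mul_comm])⟩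

lemma finrank_ker_CL_sub_DL (hu : ∀ k l, u k l = stdAddChar (k * l) / Real.sqrt N) :
    Module.finrank ℂ (LinearMap.ker (CL u - DL u)) =
      Fintype.card {p : ZMod N × ZMod N // p.1 * p.2 = 0} := by
  rw [ker_CL_sub_DL_eq_comap_dft₂ hu, Submodule.comap_equiv_eq_map_symm,
    LinearEquiv.finrank_map_eq, finrank_iInf_ker_proj_compl]
  rfl

end FourierMatrix

/-- for `n ≥ 2` and the Fourier matrix `u k l = ε(k·l)/√n` on `ℤ/nℤ`, the
complex dimension of the eigenvalue-1 eigenspace `{f | C_u f = D_u f}` of the Berezin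
transform equals `2n - 1` if and only if `n` is prime. -/
theorem stmt13 (n : ℕ) [NeZero n] (hn : 2 ≤ n)
    (ε : ZMod n → ℂ)
    (hε : ∀ m : ZMod n, ε m = Complex.exp (2 * Real.pi * Complex.I * m.val / n))
    (u : Matrix (ZMod n) (ZMod n) ℂ)
    (hu : ∀ k l, u k l = ε (k * l) / Real.sqrt n) :
    Module.finrank ℂ ↥(LinearMap.ker (CL u - DL u)) = 2 * n - 1 ↔ n.Prime := by
  have hu' (k l : ZMod n) : u k l = stdAddChar (k * l) / Real.sqrt n := by
    rw [hu, hε, stdAddChar_apply, toCircle_apply]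
  have hcount := card_mul_eq_zero_eq_iff_noZeroDivisors (M := ZMod n)
  rw [ZMod.card] at hcount
  rw [finrank_ker_CL_sub_DL hu', hcount, ZMod.noZeroDivisors_iff_prime hn]
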